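/- Let ρ be a density operator on a finite-dimensional space with U(1) representation U(θ). If ρ is invariant under U(2π/l) for a positive integer l, then ρ^(k) = 0 for every k that is not a multiple of l. Conversely, if ρ^(k) = 0 for all k not a multiple of l, then ρ is invariant under U(2π/l). -/

import Mathlib

open Complex Matrix MeasureTheory
open scoped ComplexOrder

/-- The unitary representation of U(1) on a finite-dimensional Hilbert space with
orthonormal basis indexed by `ι`, where basis vector `i` carries integer charge `c i`:
`U(θ) = Σ_n e^{inθ} Π_n`. -/
noncomputable def Urep {ι : Type*} [Fintype ι] [DecidableEq ι] (c : ι → ℤ) (θ : ℝ) :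
    Matrix ι ι ℂ :=
  Matrix.diagonal fun i => Complex.exp (Complex.I * (c i : ℂ) * (θ : ℂ))

/-- The mode-`k` component of an operator: `A^(k) = Σ_n Π_{n+k} A Π_n`. -/
def modeComp {ι : Type*} [Fintype ι] [DecidableEq ι] (c : ι → ℤ) (k : ℤ)
    (A : Matrix ι ι ℂ) : Matrix ι ι ℂ :=
  Matrix.of fun i j => if c i - c j = k then A i j else 0

/-- The trace norm `‖A‖₁ = tr √(A†A)`. -/
noncomputable def traceNorm {ι : Type*} [Fintype ι] [DecidableEq ι]
    (A : Matrix ι ι ℂ) : ℝ :=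
  (((Matrix.posSemidef_conjTranspose_mul_self A).1.eigenvectorUnitary : Matrix ι ι ℂ) *
      Matrix.diagonal (((↑) : ℝ → ℂ) ∘ (Real.sqrt ∘ (Matrix.posSemidef_conjTranspose_mul_self A).1.eigenvalues)) *
      (star (Matrix.posSemidef_conjTranspose_mul_self A).1.eigenvectorUnitary : Matrix ι ι ℂ)).trace.re

/-- The Choi matrix of a linear superoperator. -/
noncomputable def choi {ι κ : Type*} [Fintype ι] [DecidableEq ι] [Fintype κ]
    (E : Matrix ι ι ℂ →ₗ[ℂ] Matrix κ κ ℂ) : Matrix (ι × κ) (ι × κ) ℂ :=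
  Matrix.of fun p q => E (Matrix.single p.1 q.1 1) p.2 q.2

/-- A quantum channel: completely positive (positive semidefinite Choi matrix)
and trace preserving. -/
def IsCPTP {ι κ : Type*} [Fintype ι] [DecidableEq ι] [Fintype κ]
    (E : Matrix ι ι ℂ →ₗ[ℂ] Matrix κ κ ℂ) : Prop :=
  (choi E).PosSemidef ∧ ∀ A : Matrix ι ι ℂ, (E A).trace = A.trace

/-- U(1)-covariance of a superoperator with respect to input charges `c`
and output charges `d`. -/
def IsCovariant {ι κ : Type*} [Fintype ι] [DecidableEq ι] [Fintype κ] [DecidableEq κ]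
    (c : ι → ℤ) (d : κ → ℤ) (E : Matrix ι ι ℂ →ₗ[ℂ] Matrix κ κ ℂ) : Prop :=
  ∀ (θ : ℝ) (X : Matrix ι ι ℂ),
    E (Urep c θ * X * (Urep c θ)ᴴ) = Urep d θ * E X * (Urep d θ)ᴴ

/-- A density operator (quantum state). -/
def IsDensity {ι : Type*} [Fintype ι] (ρ : Matrix ι ι ℂ) : Prop :=
  ρ.PosSemidef ∧ ρ.trace = 1

/-!
Conjugation by the diagonal unitary `U(θ)` multiplies the `(i, j)` entry of `ρ` by
`e^{i (c i - c j) θ}`, and at `θ = 2π/l` this phase is `1` exactly when `l ∣ c i - c j`.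
So invariance means that every entry whose charge difference is not a multiple of `l` vanishes,
and these entries are precisely the ones making up the components `ρ^(k)` with `l ∤ k`.
-/

-- `e^{2πi m/l} = ζ^m` for the primitive `l`-th root of unity `ζ = e^{2πi/l}`.
lemma exp_I_mul_int_mul_two_pi_div_eq_one_iff {l : ℕ} (hl : l ≠ 0) (m : ℤ) :
    Complex.exp (Complex.I * (m : ℂ) * ((2 * Real.pi / l : ℝ) : ℂ)) = 1 ↔ (l : ℤ) ∣ m := by
  have hroot := Complex.isPrimitiveRoot_exp l hl
  rw [← hroot.zpow_eq_one_iff_dvd, ← Complex.exp_int_mul]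
  congr! 2
  push_cast
  ring

section

variable {ι : Type*} [Fintype ι] [DecidableEq ι] (c : ι → ℤ)

lemma Urep_mul_mul_conjTranspose_apply (θ : ℝ) (A : Matrix ι ι ℂ) (i j : ι) :
    (Urep c θ * A * (Urep c θ)ᴴ) i j
      = Complex.exp (Complex.I * ((c i - c j : ℤ) : ℂ) * (θ : ℂ)) * A i j := by
  have hconj : (starRingEnd ℂ) (Complex.exp (Complex.I * (c j : ℂ) * (θ : ℂ)))
      = Complex.exp (-(Complex.I * (c j : ℂ) * (θ : ℂ))) := by
    rw [← Complex.exp_conj]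
    simp
  simp only [Urep, Matrix.diagonal_conjTranspose, Matrix.mul_diagonal,
    Matrix.diagonal_mul, Pi.star_apply, RCLike.star_def, hconj]
  rw [mul_comm, ← mul_assoc, ← Complex.exp_add]
  congr 2
  push_cast
  ring

lemma Urep_mul_mul_conjTranspose_eq_self_iff (θ : ℝ) (A : Matrix ι ι ℂ) :
    Urep c θ * A * (Urep c θ)ᴴ = A ↔
      ∀ i j, A i j ≠ 0 → Complex.exp (Complex.I * ((c i - c j : ℤ) : ℂ) * (θ : ℂ)) = 1 := by
  simp only [← Matrix.ext_iff, Urep_mul_mul_conjTranspose_apply]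
  refine forall₂_congr fun i j => ⟨fun h hA => mul_right_cancel₀ hA (by rw [h, one_mul]), ?_⟩
  intro h
  by_cases hA : A i j = 0
  · rw [hA, mul_zero]
  · rw [h hA, one_mul]

lemma modeComp_eq_zero_iff (k : ℤ) (A : Matrix ι ι ℂ) :
    modeComp c k A = 0 ↔ ∀ i j, c i - c j = k → A i j = 0 := by
  simp [← Matrix.ext_iff, modeComp]

end

theorem stmt_7_general {ι : Type*} [Fintype ι] [DecidableEq ι] (c : ι → ℤ)
    (ρ : Matrix ι ι ℂ) (l : ℕ) (hl : 0 < l) :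
    Urep c (2 * Real.pi / l) * ρ * (Urep c (2 * Real.pi / l))ᴴ = ρ
      ↔ ∀ k : ℤ, ¬ ((l : ℤ) ∣ k) → modeComp c k ρ = 0 := by
  simp only [Urep_mul_mul_conjTranspose_eq_self_iff, modeComp_eq_zero_iff,
    exp_I_mul_int_mul_two_pi_div_eq_one_iff hl.ne']
  constructor
  · intro h k hk i j hij
    by_contra hρ
    exact hk (hij ▸ h i j hρ)
  · intro h i j hρ
    by_contra hdvd
    exact hρ (h _ hdvd i j rfl)

/-- a state ρ is invariant under `U(2π/l)` if and only if `ρ^(k) = 0`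
for every k that is not a multiple of l. -/
theorem stmt_7 {ι : Type*} [Fintype ι] [DecidableEq ι] (c : ι → ℤ)
    (ρ : Matrix ι ι ℂ) (hρ : IsDensity ρ) (l : ℕ) (hl : 0 < l) :
    Urep c (2 * Real.pi / l) * ρ * (Urep c (2 * Real.pi / l))ᴴ = ρ
      ↔ ∀ k : ℤ, ¬ ((l : ℤ) ∣ k) → modeComp c k ρ = 0 :=
  stmt_7_general c ρ l hl
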